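/- arXiv:1506.02204 — 4 statements merged into one kernel-verified Lean document; each statement's English description precedes it below -/
import Mathlib

section
/- For integers u ≥ i ≥ 1 and q a real number > 1 (or a prime power), [u choose i]_{q^2} * sum_{j=0}^{i} q^j [i choose j]_{q^2} = [u choose i]_q * prod_{j=0}^{i-1} (1 + q^(u-j)). -/
open Finset

/-- Gaussian binomial coefficient with base `Q`. -/
noncomputable def gbinomR (Q : ℝ) (n k : ℕ) : ℝ :=
  ∏ i ∈ Finset.range k, (Q ^ (n - i) - 1) / (Q ^ (k - i) - 1)

noncomputable def Fp (Q : ℝ) (n : ℕ) : ℝ := ∏ j ∈ Finset.range n, (Q ^ (j + 1) - 1)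

noncomputable def Gp (q : ℝ) (n : ℕ) : ℝ := ∏ j ∈ Finset.range n, (1 + q ^ (j + 1))

lemma Fp_pos {Q : ℝ} (hQ : 1 < Q) (n : ℕ) : 0 < Fp Q n :=
  Finset.prod_pos fun j _ => by
    have : (1 : ℝ) < Q ^ (j + 1) := one_lt_pow₀ hQ (Nat.succ_ne_zero j)
    linarith

lemma Gp_pos {q : ℝ} (hq : 0 < q) (n : ℕ) : 0 < Gp q n :=
  Finset.prod_pos fun j _ => by positivity

lemma prod_num {Q : ℝ} (hQ : 1 < Q) {k n : ℕ} (h : k ≤ n) :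
    ∏ t ∈ Finset.range k, (Q ^ (n - t) - 1) = Fp Q n / Fp Q (n - k) := by
  induction k with
  | zero =>
    simp only [Finset.range_zero, Finset.prod_empty, Nat.sub_zero]
    exact (div_self (ne_of_gt (Fp_pos hQ n))).symm
  | succ k ih =>
    have hk : k ≤ n := by omega
    have e : n - k = (n - (k + 1)) + 1 := by omega
    have hF : Fp Q (n - k) = Fp Q (n - (k + 1)) * (Q ^ (n - k) - 1) := by
      rw [e, Fp, Finset.prod_range_succ, ← e]; rfl
    have h1 : Fp Q (n - k) ≠ 0 := ne_of_gt (Fp_pos hQ _)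
    have h2 : Fp Q (n - (k + 1)) ≠ 0 := ne_of_gt (Fp_pos hQ _)
    have h3 : Q ^ (n - k) - 1 ≠ 0 := by
      have : (1 : ℝ) < Q ^ (n - k) := one_lt_pow₀ hQ (by omega)
      linarith
    rw [Finset.prod_range_succ, ih hk, hF]
    field_simp

lemma prod_num' {q : ℝ} (hq : 0 < q) {k n : ℕ} (h : k ≤ n) :
    ∏ t ∈ Finset.range k, (1 + q ^ (n - t)) = Gp q n / Gp q (n - k) := by
  induction k with
  | zero =>
    simp only [Finset.range_zero, Finset.prod_empty, Nat.sub_zero]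
    exact (div_self (ne_of_gt (Gp_pos hq n))).symm
  | succ k ih =>
    have hk : k ≤ n := by omega
    have e : n - k = (n - (k + 1)) + 1 := by omega
    have hF : Gp q (n - k) = Gp q (n - (k + 1)) * (1 + q ^ (n - k)) := by
      rw [e, Gp, Finset.prod_range_succ, ← e]; rfl
    have h1 : Gp q (n - k) ≠ 0 := ne_of_gt (Gp_pos hq _)
    have h2 : Gp q (n - (k + 1)) ≠ 0 := ne_of_gt (Gp_pos hq _)
    have h3 : (1 : ℝ) + q ^ (n - k) ≠ 0 := by positivity
    rw [Finset.prod_range_succ, ih hk, hF]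
    field_simp

lemma gbinom_eq {Q : ℝ} (hQ : 1 < Q) {k n : ℕ} (h : k ≤ n) :
    gbinomR Q n k = Fp Q n / (Fp Q k * Fp Q (n - k)) := by
  unfold gbinomR
  rw [Finset.prod_div_distrib, prod_num hQ h, prod_num hQ (le_refl k)]
  simp only [Nat.sub_self]
  have h0 : Fp Q 0 = 1 := by simp [Fp]
  rw [h0, div_one, div_div, mul_comm]

lemma gbinom_zero (Q : ℝ) (n : ℕ) : gbinomR Q n 0 = 1 := by simp [gbinomR]

lemma gbinom_self {Q : ℝ} (hQ : 1 < Q) (n : ℕ) : gbinomR Q n n = 1 := by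
  rw [gbinom_eq hQ (le_refl n), Nat.sub_self]
  have h0 : Fp Q 0 = 1 := by simp [Fp]
  rw [h0, mul_one, div_self (ne_of_gt (Fp_pos hQ n))]

lemma gbinom_succ_self (Q : ℝ) (i : ℕ) : gbinomR Q i (i + 1) = 0 :=
  Finset.prod_eq_zero (Finset.self_mem_range_succ i) (by simp)

lemma gbinom_symm {Q : ℝ} (hQ : 1 < Q) {k n : ℕ} (h : k ≤ n) :
    gbinomR Q n k = gbinomR Q n (n - k) := by
  rw [gbinom_eq hQ h, gbinom_eq hQ (Nat.sub_le n k), Nat.sub_sub_self h, mul_comm]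

lemma pascal {Q : ℝ} (hQ : 1 < Q) {j i : ℕ} (hj1 : 1 ≤ j) (hji : j ≤ i + 1) :
    gbinomR Q (i + 1) j = gbinomR Q i j + Q ^ (i + 1 - j) * gbinomR Q i (j - 1) := by
  rcases eq_or_lt_of_le hji with rfl | hlt
  · simp [gbinom_self hQ, gbinom_succ_self]
  · have hji' : j ≤ i := by omega
    obtain ⟨m, rfl⟩ : ∃ m, j = m + 1 := ⟨j - 1, by omega⟩
    obtain ⟨d, rfl⟩ : ∃ d, i = (m + 1) + d := ⟨i - (m + 1), by omega⟩
    rw [gbinom_eq hQ (by omega : m + 1 ≤ m + 1 + d + 1),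
      gbinom_eq hQ (by omega : m + 1 ≤ m + 1 + d),
      gbinom_eq hQ (by omega : m + 1 - 1 ≤ m + 1 + d)]
    have e1 : m + 1 + d + 1 - (m + 1) = d + 1 := by omega
    have e2 : m + 1 + d - (m + 1) = d := by omega
    have e3 : m + 1 - 1 = m := by omega
    have e4 : m + 1 + d - m = d + 1 := by omega
    rw [e1, e2, e3, e4]
    have hFi1 : Fp Q (m + 1 + d + 1) = Fp Q (m + 1 + d) * (Q ^ (m + 1 + d + 1) - 1) := by
      rw [Fp, Finset.prod_range_succ]; rfl
    have hFj : Fp Q (m + 1) = Fp Q m * (Q ^ (m + 1) - 1) := by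
      rw [Fp, Finset.prod_range_succ]; rfl
    have hFd : Fp Q (d + 1) = Fp Q d * (Q ^ (d + 1) - 1) := by
      rw [Fp, Finset.prod_range_succ]; rfl
    have hpow : Q ^ (d + 1) * Q ^ (m + 1) = Q ^ (m + 1 + d + 1) := by
      rw [← pow_add]; congr 1; omega
    have n1 : Fp Q (m + 1 + d) ≠ 0 := ne_of_gt (Fp_pos hQ _)
    have n2 : Fp Q m ≠ 0 := ne_of_gt (Fp_pos hQ _)
    have n3 : Fp Q d ≠ 0 := ne_of_gt (Fp_pos hQ _)
    have n4 : Q ^ (m + 1) - 1 ≠ 0 := by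
      have : (1 : ℝ) < Q ^ (m + 1) := one_lt_pow₀ hQ (by omega); linarith
    have n5 : Q ^ (d + 1) - 1 ≠ 0 := by
      have : (1 : ℝ) < Q ^ (d + 1) := one_lt_pow₀ hQ (by omega); linarith
    rw [hFi1, hFj, hFd]
    field_simp
    linear_combination (Fp Q (m + 1 + d) * Fp Q m * Fp Q d * (Q ^ (m+1) - 1) * (Q ^ (d+1) - 1)) * hpow

lemma sum_eq {q : ℝ} (hq : 1 < q) (i : ℕ) :
    ∑ j ∈ Finset.range (i + 1), q ^ j * gbinomR (q ^ 2) i j = Gp q i := by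
  have hQ : (1 : ℝ) < q ^ 2 := by nlinarith
  induction i with
  | zero => simp [gbinomR, Gp]
  | succ i ih =>
    have hq0 : (0 : ℝ) < q := by linarith
    rw [Finset.sum_range_succ']
    have hsplit : ∀ j ∈ Finset.range (i + 1),
        q ^ (j + 1) * gbinomR (q ^ 2) (i + 1) (j + 1)
          = q ^ (j + 1) * gbinomR (q ^ 2) i (j + 1)
            + q ^ (i + 1) * (q ^ (i - j) * gbinomR (q ^ 2) i j) := by
      intro j hj
      have hj' : j ≤ i := by simpa [Nat.lt_succ_iff] using hj
      rw [pascal hQ (Nat.succ_le_succ (Nat.zero_le j)) (by omega)]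
      have e : i + 1 - (j + 1) = i - j := by omega
      simp only [Nat.succ_eq_add_one, Nat.add_sub_cancel]
      rw [e]
      have hpow : q ^ (j + 1) * (q ^ 2) ^ (i - j) = q ^ (i + 1) * q ^ (i - j) := by
        rw [← pow_mul, ← pow_add, ← pow_add]; congr 1; omega
      rw [mul_add, ← mul_assoc, hpow]
      ring
    rw [Finset.sum_congr rfl hsplit, Finset.sum_add_distrib, ← Finset.mul_sum]
    have hrefl : ∑ j ∈ Finset.range (i + 1), q ^ (i - j) * gbinomR (q ^ 2) i j
        = ∑ j ∈ Finset.range (i + 1), q ^ j * gbinomR (q ^ 2) i j := by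
      have step : ∀ j ∈ Finset.range (i + 1),
          q ^ (i - j) * gbinomR (q ^ 2) i j
            = q ^ (i + 1 - 1 - j) * gbinomR (q ^ 2) i (i + 1 - 1 - j) := by
        intro j hj
        have hj' : j ≤ i := by simpa [Nat.lt_succ_iff] using hj
        rw [show i + 1 - 1 - j = i - j from by omega, ← gbinom_symm hQ hj']
      rw [Finset.sum_congr rfl step]
      exact Finset.sum_range_reflect (fun j => q ^ j * gbinomR (q ^ 2) i j) (i + 1)
    rw [hrefl, ih, gbinom_zero]
    have hS' : ∑ j ∈ Finset.range (i + 1), q ^ (j + 1) * gbinomR (q ^ 2) i (j + 1)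
        = Gp q i - 1 := by
      have h := Finset.sum_range_succ' (fun j => q ^ j * gbinomR (q ^ 2) i j) (i + 1)
      rw [Finset.sum_range_succ, ih, gbinom_succ_self, gbinom_zero] at h
      simp only [pow_zero, mul_one, mul_zero, add_zero] at h
      linarith
    have hG : Gp q (i + 1) = Gp q i * (1 + q ^ (i + 1)) := Finset.prod_range_succ _ _
    rw [hS', hG]
    ring

/-- Product formula relating `q²`-binomial and `q`-binomial coefficients. -/
theorem gbinom_qsq_mul_sum (q : ℝ) (hq : 1 < q) (u i : ℕ) (hi : 1 ≤ i) (hu : i ≤ u) :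
    gbinomR (q ^ 2) u i * ∑ j ∈ Finset.range (i + 1), q ^ j * gbinomR (q ^ 2) i j =
      gbinomR q u i * ∏ j ∈ Finset.range i, (1 + q ^ (u - j)) := by
  have hQ : (1 : ℝ) < q ^ 2 := by nlinarith
  have hq0 : (0 : ℝ) < q := by linarith
  have hFsq : ∀ n, Fp (q ^ 2) n = Fp q n * Gp q n := by
    intro n
    rw [Fp, Fp, Gp, ← Finset.prod_mul_distrib]
    exact Finset.prod_congr rfl fun j _ => by rw [← pow_mul, mul_comm 2 (j+1), pow_mul]; ring
  rw [sum_eq hq i, gbinom_eq hQ hu, gbinom_eq hq hu, prod_num' hq0 hu,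
    hFsq u, hFsq i, hFsq (u - i)]
  have n1 : Fp q u ≠ 0 := ne_of_gt (Fp_pos hq _)
  have n2 : Fp q i ≠ 0 := ne_of_gt (Fp_pos hq _)
  have n3 : Fp q (u - i) ≠ 0 := ne_of_gt (Fp_pos hq _)
  have n4 : Gp q u ≠ 0 := ne_of_gt (Gp_pos hq0 _)
  have n5 : Gp q i ≠ 0 := ne_of_gt (Gp_pos hq0 _)
  have n6 : Gp q (u - i) ≠ 0 := ne_of_gt (Gp_pos hq0 _)
  field_simp
end

section
/- For integers u ≥ i ≥ 1 and q > 1, the identity [u choose i]_{q^2} * prod_{j=0}^{i-1} (q^i + q^j) = [u choose i]_q * prod_{j=0}^{i-1} (q^u + q^j) holds. -/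
/-- `[u choose i]_{q²} ∏_{j<i}(q^i+q^j) = [u choose i]_q ∏_{j<i}(q^u+q^j)`. -/
theorem gbinom_qsq_prod_eq (q : ℝ) (hq : 1 < q) (u i : ℕ) (hi : 1 ≤ i) (hu : i ≤ u) :
    gbinomR (q ^ 2) u i * ∏ j ∈ Finset.range i, (q ^ i + q ^ j) =
      gbinomR q u i * ∏ j ∈ Finset.range i, (q ^ u + q ^ j) := by
  rw [gbinomR, gbinomR, ← Finset.prod_mul_distrib, ← Finset.prod_mul_distrib]
  refine Finset.prod_congr rfl fun j hj => ?_
  have hj' : j < i := Finset.mem_range.mp hj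
  have hij : 1 ≤ i - j := Nat.le_sub_of_add_le (by omega)
  have hlt : (1:ℝ) < q ^ (i - j) := one_lt_pow₀ hq (by omega)
  have h1 : q ^ (i - j) - 1 ≠ 0 := sub_ne_zero.mpr (ne_of_gt hlt)
  have h2 : (q ^ 2) ^ (i - j) - 1 ≠ 0 := by
    have : (1:ℝ) < (q ^ 2) ^ (i - j) := one_lt_pow₀ (by nlinarith) (by omega)
    exact sub_ne_zero.mpr (ne_of_gt this)
  have e1 : (q ^ 2) ^ (u - j) = q ^ (u - j) * q ^ (u - j) := by
    rw [← pow_mul, two_mul, pow_add]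
  have e2 : (q ^ 2) ^ (i - j) = q ^ (i - j) * q ^ (i - j) := by
    rw [← pow_mul, two_mul, pow_add]
  have e3 : q ^ i = q ^ j * q ^ (i - j) := by
    rw [← pow_add]; congr 1; omega
  have e4 : q ^ u = q ^ j * q ^ (u - j) := by
    rw [← pow_add]; congr 1; omega
  rw [e2] at h2
  rw [e1, e2, e3, e4]
  rw [div_mul_eq_mul_div, div_mul_eq_mul_div, div_eq_div_iff h2 h1]
  ring
end

section
/- For q > 1 and integers u ≥ i+1 ≥ 2, the recursion [u choose i]_{q^2} = [u choose i]_q * [u-1 choose i]_{q^2} * ([u-1 choose i]_q)^(-1) * (q^u + 1)/(q^(u-i) + 1) holds. -/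
lemma gbinom_pos (Q : ℝ) (hQ : 1 < Q) (n k : ℕ) (h : k ≤ n) : 0 < gbinomR Q n k := by
  apply Finset.prod_pos
  intro j hj
  simp only [Finset.mem_range] at hj
  have h1 : (1:ℝ) < Q ^ (n - j) := one_lt_pow₀ hQ (by omega)
  have h2 : (1:ℝ) < Q ^ (k - j) := one_lt_pow₀ hQ (by omega)
  exact div_pos (by linarith) (by linarith)

lemma gbinom_succ (Q : ℝ) (hQ : 1 < Q) (u i : ℕ) (hi : 1 ≤ i) (hu : i + 1 ≤ u) :
    gbinomR Q u i = gbinomR Q (u - 1) i * (Q ^ u - 1) / (Q ^ (u - i) - 1) := by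
  have key : (∏ j ∈ Finset.range i, (Q ^ (u - j) - 1)) * (Q ^ (u - i) - 1)
      = (∏ j ∈ Finset.range i, (Q ^ (u - 1 - j) - 1)) * (Q ^ u - 1) := by
    rw [← Finset.prod_range_succ (fun j => (Q ^ (u - j) - 1)) i,
      Finset.prod_range_succ' (fun j => (Q ^ (u - j) - 1)) i]
    rw [Finset.prod_congr rfl (fun j _ => by rw [show u - (j + 1) = u - 1 - j from by omega] :
      ∀ j ∈ Finset.range i, (Q ^ (u - (j+1)) - 1) = (Q ^ (u - 1 - j) - 1))]
    norm_num
  have hden : ∀ j ∈ Finset.range i, (Q ^ (i - j) - 1) ≠ 0 := by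
    intro j hj
    simp only [Finset.mem_range] at hj
    have : (1:ℝ) < Q ^ (i - j) := one_lt_pow₀ hQ (by omega)
    linarith
  have hD : (∏ j ∈ Finset.range i, (Q ^ (i - j) - 1)) ≠ 0 :=
    Finset.prod_ne_zero_iff.mpr hden
  have hui : (Q ^ (u - i) - 1) ≠ 0 := by
    have : (1:ℝ) < Q ^ (u - i) := one_lt_pow₀ hQ (by omega)
    linarith
  unfold gbinomR
  rw [Finset.prod_div_distrib, Finset.prod_div_distrib]
  field_simp
  linear_combination key

/-- Recursion for `q²`-binomial coefficients in terms of `q`-binomials. -/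
theorem gbinom_qsq_recursion (q : ℝ) (hq : 1 < q) (u i : ℕ) (hi : 1 ≤ i) (hu : i + 1 ≤ u) :
    gbinomR (q ^ 2) u i =
      gbinomR q u i * gbinomR (q ^ 2) (u - 1) i * (gbinomR q (u - 1) i)⁻¹ *
        ((q ^ u + 1) / (q ^ (u - i) + 1)) := by
  have hq2 : (1:ℝ) < q ^ 2 := one_lt_pow₀ hq (by norm_num)
  have ha : 0 < gbinomR q (u - 1) i := gbinom_pos q hq (u - 1) i (by omega)
  rw [gbinom_succ q hq u i hi hu, gbinom_succ (q ^ 2) hq2 u i hi hu]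
  have h1 : (q ^ (u - i) - 1) ≠ 0 := by
    have : (1:ℝ) < q ^ (u - i) := one_lt_pow₀ hq (by omega); linarith
  have h2 : (q ^ (u - i) + 1) ≠ 0 := by positivity
  have h3 : ((q ^ 2) ^ (u - i) - 1) ≠ 0 := by
    have : (1:ℝ) < (q ^ 2) ^ (u - i) := one_lt_pow₀ hq2 (by omega); linarith
  have ha' : gbinomR q (u - 1) i ≠ 0 := ne_of_gt ha
  have e1 : ((q:ℝ) ^ 2) ^ u = (q ^ u) ^ 2 := by ring
  have e2 : ((q:ℝ) ^ 2) ^ (u - i) = (q ^ (u - i)) ^ 2 := by ring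
  rw [e2] at h3; rw [e1, e2]
  set a := q ^ u with hadef
  set b := q ^ (u - i) with hbdef
  have hb1 : b - 1 ≠ 0 := h1
  have hb2 : b + 1 ≠ 0 := h2
  have hb3 : b ^ 2 - 1 ≠ 0 := h3
  field_simp
  ring
end

section
/- Let m = 2n, d, e positive integers with e = gcd(n,d) = gcd(m,d), and 1 ≤ k ≤ n/e. For a = (a_0, a_1, ..., a_{k-1}) with a_0 ∈ F_{2^n}, a_j ∈ F_{2^m}, if a ≠ 0, then the F_{2^e}-dimension of the radical of the alternating bilinear form B_a(x,y) = Tr_{F_{2^n}/F_{2^e}}(a_0(x y^{2^{nd/e}} + x^{2^{nd/e}} y)) + sum_{j=1}^{k-1} Tr_{F_{2^m}/F_{2^e}}(a_j(x y^{2^{(n/e-j)d}} + x^{2^{(n/e-j)d}} y)) on F_{2^m} is at most 2(k-1); equivalently rank(B_a) ≥ m/e - 2(k-1). -/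
open Finset Polynomial

/-- The relative trace from `F_{2^N}` to `F_{2^e}` (for `z` in the subfield `F_{2^N}`
of `F_{2^m}`), written as an explicit sum of conjugates. -/
noncomputable def relTr (m N e : ℕ) (z : GaloisField 2 m) : GaloisField 2 m :=
  ∑ i ∈ Finset.range (N / e), z ^ (2 ^ (e * i))

/-- The alternating bilinear form `B_a` on `F_{2^m}` attached to
`a = (a₀, a₁, …, a_{k-1}) ∈ F_{2^n} × F_{2^m}^{k-1}`. -/
noncomputable def Bform (m n d e k : ℕ) (a0 : GaloisField 2 m)
    (a : Fin (k - 1) → GaloisField 2 m) (x y : GaloisField 2 m) : GaloisField 2 m :=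
  relTr m n e (a0 * (x * y ^ (2 ^ (n / e * d)) + x ^ (2 ^ (n / e * d)) * y)) +
    ∑ j : Fin (k - 1),
      relTr m m e (a j * (x * y ^ (2 ^ ((n / e - ((j : ℕ) + 1)) * d)) +
        x ^ (2 ^ ((n / e - ((j : ℕ) + 1)) * d)) * y))


section helpers
variable {K : Type*} [Field K]

lemma pow2_pow2 (z : K) (a b : ℕ) : (z ^ 2^a) ^ 2^b = z ^ 2^(a+b) := by
  rw [← pow_mul, ← pow_add]

lemma pow2_mul_self {z : K} {c : ℕ} (hz : z ^ 2^c = z) (t : ℕ) : z ^ 2^(c*t) = z := by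
  induction t with
  | zero => simp
  | succ t ih => rw [Nat.mul_succ, ← pow2_pow2, ih, hz]

lemma pow2_mod {m : ℕ} {z : K} (hz : z ^ 2^m = z) (t : ℕ) : z ^ 2^t = z ^ 2^(t % m) := by
  conv_lhs => rw [← Nat.div_add_mod t m]
  rw [← pow2_pow2, pow2_mul_self hz]

lemma pow2_gcd {z : K} : ∀ {a b : ℕ}, z ^ 2^a = z → z ^ 2^b = z → z ^ 2^(Nat.gcd a b) = z := by
  intro a b
  induction a, b using Nat.gcd.induction with
  | H0 b => intro _ hb; simpa using hb
  | H1 a b ha ih =>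
    intro hza hzb
    rw [Nat.gcd_rec]
    refine ih ?_ hza
    have h1 : z ^ 2^(a * (b / a)) = z := pow2_mul_self hza _
    calc z ^ 2^(b % a) = (z ^ 2^(a * (b/a))) ^ 2^(b % a) := by rw [h1]
      _ = z ^ 2^(a * (b/a) + b % a) := pow2_pow2 ..
      _ = z := by rw [Nat.div_add_mod]; exact hzb

variable [CharP K 2]

lemma pow2_add_pow (u v : K) (t : ℕ) : (u+v)^2^t = u^2^t + v^2^t := add_pow_char_pow u v 2 t

lemma pow2_sub_pow (u v : K) (t : ℕ) : (u-v)^2^t = u^2^t - v^2^t := sub_pow_char_pow u v t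

lemma pow2_inj (t : ℕ) : Function.Injective (fun z : K => z ^ 2^t) := by
  intro z w h
  have h2 : (z - w) ^ 2^t = 0 := by rw [pow2_sub_pow]; simp only at h; rw [h, sub_self]
  have := pow_eq_zero_iff (n := 2^t) (by positivity) |>.mp h2
  exact sub_eq_zero.mp this
end helpers

section counting
variable {K : Type*} [Field K]

lemma card_eval_zero_le (P : K[X]) (hP : P ≠ 0) :
    Nat.card {z : K // P.eval z = 0} ≤ P.natDegree := by
  classical
  have h1 : {z : K | P.eval z = 0} = ↑P.roots.toFinset := by
    ext z; simp [Polynomial.mem_roots', hP, Polynomial.IsRoot]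
  calc Nat.card {z : K // P.eval z = 0} = ({z : K | P.eval z = 0} : Set K).ncard :=
        Nat.card_coe_set_eq _
    _ = (P.roots.toFinset).card := by rw [h1, Set.ncard_coe_finset]
    _ ≤ Multiset.card P.roots := Multiset.toFinset_card_le _
    _ ≤ P.natDegree := P.card_roots'

/-- number of solutions of `z^(2^N) = z` is at most `2^N` (for `N ≥ 1`). -/
lemma card_fixed_le (N : ℕ) (hN : 1 ≤ N) :
    Nat.card {z : K // z ^ 2^N = z} ≤ 2^N := by
  have h2 : (1:ℕ) < 2^N := by
    have := Nat.one_lt_two_pow_iff (n := N); omega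
  set P : K[X] := X ^ 2^N - X with hPdef
  have hdeg : P.degree = (2^N : ℕ) := by
    rw [hPdef]
    rw [Polynomial.degree_sub_eq_left_of_degree_lt, Polynomial.degree_X_pow]
    rw [Polynomial.degree_X_pow, Polynomial.degree_X]
    exact_mod_cast h2
  have hP0 : P ≠ 0 := by
    intro h; rw [h, Polynomial.degree_zero] at hdeg; exact WithBot.bot_ne_coe hdeg
  have hnd : P.natDegree = 2^N := Polynomial.natDegree_eq_of_degree_eq_some hdeg
  have := card_eval_zero_le P hP0
  rw [hnd] at this
  refine le_trans (le_of_eq (Nat.card_congr (Equiv.subtypeEquivRight ?_))) this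
  intro z; simp [hPdef, sub_eq_zero]

end counting

lemma nondeg (m e : ℕ) (hm0 : m ≠ 0) (he0 : e ≠ 0) (hem : e ∣ m)
    (w : GaloisField 2 m)
    (h : ∀ y : GaloisField 2 m, ∑ i ∈ range (m/e), (w * y) ^ 2^(e*i) = 0) :
    w = 0 := by
  classical
  by_contra hw
  set M := m / e with hM
  have hM1 : 1 ≤ M := Nat.one_le_div_iff (Nat.pos_of_ne_zero he0) |>.mpr
    (Nat.le_of_dvd (Nat.pos_of_ne_zero hm0) hem)
  have heM : e * M = m := Nat.mul_div_cancel' hem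
  set N := 2^(e*(M-1)) with hN
  set P : (GaloisField 2 m)[X] := ∑ i ∈ range M, C (w ^ 2^(e*i)) * X ^ (2^(e*i)) with hPdef
  have heval : ∀ y : GaloisField 2 m, P.eval y = 0 := by
    intro y
    rw [hPdef]
    simp only [Polynomial.eval_finset_sum, Polynomial.eval_mul, Polynomial.eval_C,
      Polynomial.eval_pow, Polynomial.eval_X]
    rw [← h y]
    exact Finset.sum_congr rfl fun i _ => by rw [mul_pow]
  have hcoeff : P.coeff N = w ^ 2^(e*(M-1)) := by
    rw [hPdef, Polynomial.finset_sum_coeff]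
    rw [Finset.sum_eq_single (M-1)]
    · rw [Polynomial.coeff_C_mul, Polynomial.coeff_X_pow, hN, if_pos rfl, mul_one]
    · intro i hi hne
      rw [Polynomial.coeff_C_mul, Polynomial.coeff_X_pow, if_neg, mul_zero]
      intro hEq
      have : e * (M-1) = e * i := by
        have := Nat.pow_right_injective (le_refl 2) hEq.symm
        omega
      have := Nat.eq_of_mul_eq_mul_left (Nat.pos_of_ne_zero he0) this
      simp only [Finset.mem_range] at hi
      omega
    · intro hmem
      simp only [Finset.mem_range] at hmem
      omega
  have hP0 : P ≠ 0 := by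
    intro hz
    rw [hz, Polynomial.coeff_zero] at hcoeff
    exact pow_ne_zero _ hw hcoeff.symm
  have hnd : P.natDegree ≤ N := by
    rw [hPdef]
    refine Polynomial.natDegree_sum_le_of_forall_le _ _ fun i hi => ?_
    refine le_trans (Polynomial.natDegree_C_mul_le _ _) ?_
    rw [Polynomial.natDegree_X_pow, hN]
    exact Nat.pow_le_pow_right (by norm_num)
      (Nat.mul_le_mul_left e (by simp only [Finset.mem_range] at hi; omega))
  have hcard := card_eval_zero_le P hP0
  have hcardK : Nat.card {z : GaloisField 2 m // P.eval z = 0} = 2^m := by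
    rw [Nat.card_congr (Equiv.subtypeUnivEquiv heval)]
    exact GaloisField.card 2 m hm0
  rw [hcardK] at hcard
  have : (2:ℕ)^m < 2^m := by
    calc (2:ℕ)^m ≤ P.natDegree := hcard
      _ ≤ N := hnd
      _ < 2^m := by
        rw [hN]
        exact Nat.pow_lt_pow_right (by norm_num) (by
          have hh : e * (M-1) + e * 1 = e * M := by rw [← Nat.mul_add]; congr 1; omega
          omega)
  omega

/-- Synthetic division coefficients (from the top) for dividing the twisted polynomial
with coefficients `c` (degree `R`) by `τ - α` where `τ = Frob^d`. -/
noncomputable def mcoefAux {K : Type*} [Field K] (d : ℕ) (α : K) (c : ℕ → K) (R : ℕ) : ℕ → K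
  | 0 => c R
  | j+1 => c (R-1-j) + mcoefAux d α c R j * α ^ 2^(d*(R-1-j))

section division
variable {K : Type*} [Field K] [CharP K 2]

omit [CharP K 2] in
lemma mcoef_rec (d : ℕ) (α : K) (c : ℕ → K) (R' i : ℕ) (hi : i < R') :
    mcoefAux d α c (R'+1) (R'-i) = c (i+1) + mcoefAux d α c (R'+1) (R'-(i+1)) * α ^ 2^(d*(i+1)) := by
  have h1 : R' - i = (R' - (i+1)) + 1 := by omega
  rw [h1, mcoefAux]
  have h2 : R' + 1 - 1 - (R' - (i+1)) = i + 1 := by omega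
  rw [h2]

lemma divide (d R' : ℕ) (c : ℕ → K) (α : K) (y : K) :
    ∑ r ∈ range (R'+2), c r * y ^ 2^(d*r)
      = (∑ i ∈ range (R'+1), (mcoefAux d α c (R'+1) (R'-i)) * (y^2^d - α*y) ^ 2^(d*i))
        + (c 0 + mcoefAux d α c (R'+1) (R'-0) * α) * y := by
  set mm : ℕ → K := fun i => mcoefAux d α c (R'+1) (R'-i) with hmm
  have hexp : ∀ i, (y^2^d - α*y) ^ 2^(d*i)
      = y ^ 2^(d*(i+1)) - α ^ 2^(d*i) * y ^ 2^(d*i) := by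
    intro i
    rw [pow2_sub_pow, mul_pow, pow2_pow2]
    congr 2
    ring
  have hLHS : ∑ r ∈ range (R'+2), c r * y ^ 2^(d*r)
      = (∑ r ∈ range R', c (r+1) * y ^ 2^(d*(r+1))) + c 0 * y
        + c (R'+1) * y ^ 2^(d*(R'+1)) := by
    rw [Finset.sum_range_succ, Finset.sum_range_succ']
    simp only [Nat.mul_zero, pow_zero, pow_one]
  have hRHS1 : ∑ i ∈ range (R'+1), mm i * y ^ 2^(d*(i+1))
      = (∑ i ∈ range R', mm i * y ^ 2^(d*(i+1))) + mm R' * y ^ 2^(d*(R'+1)) :=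
    Finset.sum_range_succ _ _
  have hRHS2 : ∑ i ∈ range (R'+1), mm i * (α ^ 2^(d*i) * y ^ 2^(d*i))
      = (∑ i ∈ range R', mm (i+1) * (α ^ 2^(d*(i+1)) * y ^ 2^(d*(i+1)))) + mm 0 * (α * y) := by
    rw [Finset.sum_range_succ']
    simp only [Nat.mul_zero, pow_zero, pow_one]
  have hmmtop : mm R' = c (R'+1) := by
    simp only [hmm, Nat.sub_self]
    rfl
  have hc : ∀ r < R', c (r+1) = mm r - mm (r+1) * α ^ 2^(d*(r+1)) := by
    intro r hr
    have := mcoef_rec d α c R' r hr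
    simp only [hmm]
    rw [this]
    ring
  calc ∑ r ∈ range (R'+2), c r * y ^ 2^(d*r)
      = (∑ r ∈ range R', (mm r - mm (r+1) * α ^ 2^(d*(r+1))) * y ^ 2^(d*(r+1))) + c 0 * y
        + mm R' * y ^ 2^(d*(R'+1)) := by
        rw [hLHS, hmmtop]
        congr 2
        refine Finset.sum_congr rfl fun r hr => ?_
        rw [hc r (Finset.mem_range.mp hr)]
    _ = (∑ i ∈ range (R'+1), mm i * ((y^2^d - α*y) ^ 2^(d*i))) + (c 0 + mm 0 * α) * y := by
        simp only [hexp, mul_sub]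
        rw [Finset.sum_sub_distrib, hRHS1, hRHS2]
        simp only [sub_mul, mul_sub]
        rw [Finset.sum_sub_distrib]
        have hassoc : ∑ x ∈ range R', mm (x+1) * (α ^ 2^(d*(x+1)) * y ^ 2^(d*(x+1)))
            = ∑ x ∈ range R', mm (x+1) * α ^ 2^(d*(x+1)) * y ^ 2^(d*(x+1)) :=
          Finset.sum_congr rfl fun x _ => by ring
        rw [hassoc]
        ring

lemma card_le_one_subzero {K : Type*} [Zero K] {p : K → Prop} (h : ∀ x, p x → x = 0) :
    Nat.card {x : K // p x} ≤ 1 := by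
  have hval : ∀ s : {x : K // p x}, s.1 = 0 := fun s => h s.1 s.2
  have inj : Function.Injective (fun _ : {x : K // p x} => ()) :=
    fun a b _ => Subtype.ext (by rw [hval a, hval b])
  simpa using Nat.card_le_card_of_injective _ inj

lemma card_scaled_fix_le {K : Type*} [Field K] [Finite K] (d q : ℕ) (hq : 1 ≤ q)
    (hfix : Nat.card {z : K // z ^ 2^d = z} ≤ q) (α : K) :
    Nat.card {z : K // z ^ 2^d = α * z} ≤ q := by
  by_cases hex : ∃ x : K, x ≠ 0 ∧ x ^ 2^d = α * x
  · obtain ⟨x, hx0, hx⟩ := hex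
    have hα : α ≠ 0 := by
      intro h; rw [h, zero_mul] at hx
      exact hx0 (pow_eq_zero_iff (by positivity) |>.mp hx)
    have key : ∀ z : {z : K // z ^ 2^d = α * z}, (z.1 * x⁻¹) ^ 2^d = z.1 * x⁻¹ := by
      intro z
      rw [mul_pow, inv_pow, z.2, hx, mul_inv]
      field_simp
    have inj : Function.Injective
        (fun z : {z : K // z ^ 2^d = α * z} => (⟨z.1 * x⁻¹, key z⟩ : {z : K // z ^ 2^d = z})) := by
      intro a b h
      exact Subtype.ext (mul_left_injective₀ (inv_ne_zero hx0) (congrArg Subtype.val h))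
    exact le_trans (Nat.card_le_card_of_injective _ inj) hfix
  · push_neg at hex
    refine le_trans (card_le_one_subzero ?_) hq
    intro z hz
    by_contra h0
    exact (hex z h0) hz

lemma key_count {K : Type*} [Field K] [CharP K 2] [Finite K] (d q : ℕ) (hq : 1 ≤ q)
    (hfix : Nat.card {z : K // z ^ 2^d = z} ≤ q) :
    ∀ (R : ℕ) (c : ℕ → K) (r0 : ℕ), r0 ≤ R → c r0 ≠ 0 →
      Nat.card {x : K // ∑ r ∈ range (R+1), c r * x ^ 2^(d*r) = 0} ≤ q^R := by
  intro R
  induction R with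
  | zero =>
    intro c r0 hr0 hc
    interval_cases r0
    refine le_trans (card_le_one_subzero ?_) (by simp)
    intro x hx
    rw [Finset.sum_range_one] at hx
    simp only [Nat.mul_zero, pow_zero, pow_one] at hx
    exact (mul_eq_zero.mp hx).resolve_left hc
  | succ R' ih =>
    intro c r0 hr0 hc
    by_cases c0 : c 0 = 0
    · -- bottom coefficient zero: compose with Frobenius
      have hr0' : r0 ≠ 0 := fun h => hc (h ▸ c0)
      have hsum : ∀ x : K, ∑ r ∈ range (R'+1+1), c r * x ^ 2^(d*r)
          = ∑ r ∈ range (R'+1), c (r+1) * (x^2^d) ^ 2^(d*r) := by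
        intro x
        rw [Finset.sum_range_succ', c0, zero_mul, add_zero]
        refine Finset.sum_congr rfl fun r _ => ?_
        rw [pow2_pow2]
        congr 2
        ring
      have inj : Function.Injective
          (fun x : {x : K // ∑ r ∈ range (R'+1+1), c r * x ^ 2^(d*r) = 0} =>
            (⟨x.1 ^ 2^d, by rw [← hsum]; exact x.2⟩ :
              {z : K // ∑ r ∈ range (R'+1), c (r+1) * z ^ 2^(d*r) = 0})) := by
        intro a b h
        exact Subtype.ext (pow2_inj d (congrArg Subtype.val h))
      refine le_trans (Nat.card_le_card_of_injective _ inj) ?_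
      refine le_trans (ih (fun r => c (r+1)) (r0-1) (by omega) (by
        show c (r0-1+1) ≠ 0
        have hh : r0 - 1 + 1 = r0 := by omega
        rw [hh]; exact hc)) ?_
      exact Nat.pow_le_pow_right hq (Nat.le_succ _)
    · by_cases hker : ∀ x : K, (∑ r ∈ range (R'+1+1), c r * x ^ 2^(d*r) = 0) → x = 0
      · exact le_trans (card_le_one_subzero hker) (Nat.one_le_pow _ _ hq)
      · push_neg at hker
        obtain ⟨x₀, hLx₀, hx₀⟩ := hker
        set α : K := x₀^2^d * x₀⁻¹ with hαdef
        have hαx₀ : α * x₀ = x₀ ^ 2^d := by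
          rw [hαdef]; field_simp
        have hDx₀ : x₀^2^d - α * x₀ = 0 := by rw [hαx₀, sub_self]
        set mm : ℕ → K := fun i => mcoefAux d α c (R'+1) (R'-i) with hmmdef
        have hdiv := divide (K := K) d R' c α
        have hρ : c 0 + mm 0 * α = 0 := by
          have h1 := hdiv x₀
          rw [hDx₀, hLx₀] at h1
          have hz : ∀ i ∈ range (R'+1), mm i * (0:K)^2^(d*i) = 0 := fun i _ => by
            rw [zero_pow (by positivity), mul_zero]
          rw [Finset.sum_eq_zero hz, zero_add] at h1
          exact ((mul_eq_zero.mp h1.symm).resolve_right hx₀)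
        have hLM : ∀ y : K, ∑ r ∈ range (R'+1+1), c r * y ^ 2^(d*r)
            = ∑ i ∈ range (R'+1), mm i * (y^2^d - α*y) ^ 2^(d*i) := by
          intro y
          rw [hdiv y, hρ, zero_mul, add_zero]
        set D : K → K := fun y => y^2^d - α*y with hDdef
        have hDsub : ∀ u v : K, D (u - v) = D u - D v := by
          intro u v
          simp only [hDdef]
          rw [pow2_sub_pow]
          ring
        have hg : ∀ y : K, D (Function.invFun D (D y)) = D y :=
          fun y => Function.invFun_eq ⟨y, rfl⟩
        have inj : Function.Injective
            (fun x : {x : K // ∑ r ∈ range (R'+1+1), c r * x ^ 2^(d*r) = 0} =>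
              ((⟨D x.1, by rw [← hLM]; exact x.2⟩ :
                  {z : K // ∑ i ∈ range (R'+1), mm i * z ^ 2^(d*i) = 0}),
               (⟨x.1 - Function.invFun D (D x.1), by rw [hDsub, hg, sub_self]⟩ :
                  {w : K // D w = 0}))) := by
          intro a b h
          rw [Prod.ext_iff] at h
          obtain ⟨h1, h2⟩ := h
          have h1' : D a.1 = D b.1 := congrArg Subtype.val h1
          have h2' : a.1 - Function.invFun D (D a.1) = b.1 - Function.invFun D (D b.1) :=
            congrArg Subtype.val h2
          rw [h1'] at h2'
          exact Subtype.ext (by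
            have := sub_left_injective h2'
            exact this)
        refine le_trans (Nat.card_le_card_of_injective _ inj) ?_
        rw [Nat.card_prod]
        have b1 : Nat.card {z : K // ∑ i ∈ range (R'+1), mm i * z ^ 2^(d*i) = 0} ≤ q^R' := by
          refine ih mm 0 (Nat.zero_le _) ?_
          intro hm0
          rw [hm0, zero_mul, add_zero] at hρ
          exact c0 hρ
        have b2 : Nat.card {w : K // D w = 0} ≤ q := by
          have : Nat.card {w : K // D w = 0} = Nat.card {w : K // w ^ 2^d = α * w} := by
            refine Nat.card_congr (Equiv.subtypeEquivRight ?_)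
            intro w
            simp only [hDdef]
            rw [sub_eq_zero]
          rw [this]
          exact card_scaled_fix_le d q hq hfix α
        calc Nat.card {z : K // ∑ i ∈ range (R'+1), mm i * z ^ 2^(d*i) = 0}
              * Nat.card {w : K // D w = 0} ≤ q^R' * q := Nat.mul_le_mul b1 b2
          _ = q^(R'+1) := by ring

lemma fin_app_congr {γ : Type*} {k : ℕ} (a : Fin k → γ) {i j : ℕ} (hi : i < k) (hj : j < k)
    (h : i = j) : a ⟨i, hi⟩ = a ⟨j, hj⟩ := by subst h; rfl

/-- If `(a₀, a₁, …, a_{k-1}) ≠ 0` then the radical of `B_a`, an `F_{2^e}`-subspace of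
`F_{2^m}`, has dimension at most `2(k-1)`, i.e. cardinality at most `(2^e)^(2(k-1))`;
equivalently `rank(B_a) ≥ m/e - 2(k-1)`. -/

theorem radical_dim_le (m n d e k : ℕ) (hm : m = 2 * n)
    (he : e = Nat.gcd n d) (he' : e = Nat.gcd m d) (hd : 0 < d) (hn : 0 < n)
    (hk : 1 ≤ k) (hk' : k ≤ n / e)
    (a0 : GaloisField 2 m) (ha0 : a0 ^ 2 ^ n = a0)
    (a : Fin (k - 1) → GaloisField 2 m)
    (ha : ¬(a0 = 0 ∧ ∀ j, a j = 0)) :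
    Nat.card {x : GaloisField 2 m // ∀ y, Bform m n d e k a0 a x y = 0} ≤
      (2 ^ e) ^ (2 * (k - 1)) := by
  classical
  have hm0 : m ≠ 0 := by omega
  have he0 : e ≠ 0 := by
    rw [he]
    intro hz
    rw [Nat.gcd_eq_zero_iff] at hz
    omega
  have hen : e ∣ n := he ▸ Nat.gcd_dvd_left n d
  have hed : e ∣ d := he ▸ Nat.gcd_dvd_right n d
  have hem : e ∣ m := he' ▸ Nat.gcd_dvd_left m d
  set ν := n / e with hν
  set s := d / e with hs
  have hnν : e * ν = n := Nat.mul_div_cancel' hen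
  have hds : e * s = d := Nat.mul_div_cancel' hed
  have hν1 : 1 ≤ ν := le_trans hk hk'
  have hkν : k ≤ ν := hk'
  have hM : m / e = 2 * ν := by
    have : m = e * (2 * ν) := by rw [hm, ← hnν]; ring
    rw [this, Nat.mul_div_cancel_left _ (Nat.pos_of_ne_zero he0)]
  have hm2 : e * (2*ν) = m := by rw [hm, ← hnν]; ring
  have hsodd : ∃ u, s = 2*u + 1 := by
    rcases Nat.even_or_odd s with hev | hod
    · exfalso
      obtain ⟨u, hu⟩ := hev
      have h2d : 2*e ∣ d := ⟨u, by rw [← hds, hu]; ring⟩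
      have h2m : 2*e ∣ m := ⟨ν, by rw [hm, ← hnν]; ring⟩
      have := Nat.dvd_gcd h2m h2d
      rw [← he'] at this
      have := Nat.le_of_dvd (Nat.pos_of_ne_zero he0) this
      omega
    · obtain ⟨u, hu⟩ := hod
      exact ⟨u, hu⟩
  haveI : Fintype (GaloisField 2 m) := Fintype.ofFinite _
  have hzm : ∀ w : GaloisField 2 m, w ^ 2^m = w := by
    intro w
    have hc := GaloisField.card 2 m hm0
    rw [Nat.card_eq_fintype_card] at hc
    calc w ^ 2^m = w ^ Fintype.card (GaloisField 2 m) := by rw [hc]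
      _ = w := FiniteField.pow_card w
  -- the trace maps
  set T : GaloisField 2 m → GaloisField 2 m := fun z => ∑ i ∈ range (2*ν), z^2^(e*i) with hT
  set Tn : GaloisField 2 m → GaloisField 2 m := fun z => ∑ i ∈ range ν, z^2^(e*i) with hTn
  have Tadd : ∀ u v : GaloisField 2 m, T (u+v) = T u + T v := by
    intro u v
    rw [hT]
    simp only [pow2_add_pow]
    rw [Finset.sum_add_distrib]
  have Tnadd : ∀ u v : GaloisField 2 m, Tn (u+v) = Tn u + Tn v := by
    intro u v
    rw [hTn]
    simp only [pow2_add_pow]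
    rw [Finset.sum_add_distrib]
  have Tzero : T 0 = 0 := by
    rw [hT]
    refine Finset.sum_eq_zero fun i _ => ?_
    exact zero_pow (by positivity)
  have Tsum : ∀ (g : Fin (k-1) → GaloisField 2 m), T (∑ j, g j) = ∑ j, T (g j) := by
    intro g
    induction (univ : Finset (Fin (k-1))) using Finset.cons_induction with
    | empty => simpa using Tzero
    | cons j t hj iht => rw [Finset.sum_cons, Finset.sum_cons, Tadd, iht]
  have hwin : ∀ (f : ℕ → GaloisField 2 m), (∀ i, f (i+2*ν) = f i) →
      ∀ t, ∑ i ∈ range (2*ν), f (i+t) = ∑ i ∈ range (2*ν), f i := by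
    intro f hf t
    induction t with
    | zero => simp
    | succ t iht =>
      have step : ∑ i ∈ range (2*ν), f (i+(t+1)) = ∑ i ∈ range (2*ν), f (i+t) := by
        have e1 : ∑ i ∈ range (2*ν), f (i+(t+1)) = ∑ i ∈ range (2*ν), f ((i+1)+t) :=
          Finset.sum_congr rfl fun i _ => by congr 1; omega
        have e2 : ∑ i ∈ range (2*ν+1), f (i+t)
            = ∑ i ∈ range (2*ν), f ((i+1)+t) + f (0+t) := Finset.sum_range_succ' _ _
        have e3 : ∑ i ∈ range (2*ν+1), f (i+t)
            = ∑ i ∈ range (2*ν), f (i+t) + f (2*ν+t) := Finset.sum_range_succ _ _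
        have e4 : f (2*ν+t) = f (0+t) := by
          rw [Nat.zero_add, Nat.add_comm]
          exact hf t
        rw [e1]
        have := e2.symm.trans e3
        rw [e4] at this
        exact add_right_cancel this
      rw [step, iht]
  have Tshift : ∀ (z : GaloisField 2 m) (t : ℕ), T (z ^ 2^(e*t)) = T z := by
    intro z t
    rw [hT]
    simp only
    have h1 : ∀ i, (z ^ 2^(e*t)) ^ 2^(e*i) = z ^ 2^(e*(i+t)) := by
      intro i
      rw [pow2_pow2]
      congr 1
      ring
    simp only [h1]
    refine hwin (fun i => z ^ 2^(e*i)) (fun i => ?_) t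
    have : e*(i+2*ν) = e*i + m := by rw [← hm2]; ring
    rw [this, ← pow2_pow2, hzm]
  have hsplit : ∀ z : GaloisField 2 m, T z = Tn z + Tn (z^2^n) := by
    intro z
    rw [hT, hTn]
    simp only [two_mul]
    rw [Finset.sum_range_add]
    congr 1
    refine Finset.sum_congr rfl fun i _ => ?_
    rw [pow2_pow2]
    congr 1
    rw [Nat.mul_add, hnν]
  have key0 : ∀ w : GaloisField 2 m, w ^ 2^(ν*d) = w ^ 2^n := by
    intro w
    obtain ⟨u, hu⟩ := hsodd
    rw [pow2_mod (hzm w) (ν*d), pow2_mod (hzm w) n]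
    congr 2
    have h1 : ν * d = n + u*m := by rw [← hds, hu, hm, ← hnν]; ring
    rw [h1, Nat.add_mul_mod_self_right]
  -- the linearized polynomial
  set W : GaloisField 2 m → GaloisField 2 m := fun x => a0 * x^2^n +
    ∑ j : Fin (k-1), (a j ^ 2^((ν+(j:ℕ)+1)*d) * x^2^((ν+(j:ℕ)+1)*d)
      + a j * x^2^((ν-((j:ℕ)+1))*d)) with hW
  have hBsum : ∀ x y : GaloisField 2 m, Bform m n d e k a0 a x y = T (W x * y) := by
    intro x y
    rw [Bform]
    have hrel : ∀ z : GaloisField 2 m, relTr m m e z = T z := by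
      intro z; rw [relTr, hT, hM]
    have hreln : ∀ z : GaloisField 2 m, relTr m n e z = Tn z := by
      intro z; rw [relTr, hTn, ← hν]
    -- Term0
    have hT0 : relTr m n e (a0 * (x * y ^ 2^(n/e*d) + x ^ 2^(n/e*d) * y))
        = T ((a0 * x^2^n) * y) := by
      rw [hreln, ← hν, key0 x, key0 y]
      have hconj : (a0*(x*y^2^n))^2^n = a0*(x^2^n*y) := by
        rw [mul_pow, mul_pow, ha0, pow2_pow2]
        have : n + n = m := by omega
        rw [this, hzm]
      calc Tn (a0 * (x * y^2^n + x^2^n * y))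
          = Tn (a0*(x*y^2^n)) + Tn ((a0*(x*y^2^n))^2^n) := by
            rw [mul_add, Tnadd, hconj]
        _ = T (a0*(x*y^2^n)) := (hsplit _).symm
        _ = T ((a0*(x*y^2^n))^2^(e*ν)) := (Tshift _ ν).symm
        _ = T ((a0 * x^2^n) * y) := by rw [hnν, hconj]; ring_nf
    rw [hT0]
    -- Term j
    have hTj : ∀ j : Fin (k-1),
        relTr m m e (a j * (x * y ^ 2^((ν-((j:ℕ)+1))*d) + x ^ 2^((ν-((j:ℕ)+1))*d) * y))
          = T ((a j ^ 2^((ν+(j:ℕ)+1)*d) * x^2^((ν+(j:ℕ)+1)*d)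
              + a j * x^2^((ν-((j:ℕ)+1))*d)) * y) := by
      intro j
      have hj : (j:ℕ) + 1 ≤ ν := by
        have := j.2
        omega
      set cj := (ν-((j:ℕ)+1))*d with hcj
      set tj := (ν+(j:ℕ)+1)*d with htj
      have h1 : (a j*(x*y^2^cj))^2^tj = a j^2^tj * (x^2^tj * y) := by
        rw [mul_pow, mul_pow, pow2_pow2]
        have h2 : cj + tj = m * s := by
          rw [hcj, htj, ← Nat.add_mul,
            show (ν-((j:ℕ)+1)) + (ν+(j:ℕ)+1) = 2*ν from by omega, ← hds, hm, ← hnν]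
          ring
        rw [h2, pow2_mul_self (hzm y) s]
      have h3 : e * (((ν+(j:ℕ)+1))*s) = tj := by rw [htj, ← hds]; ring
      calc relTr m m e (a j * (x * y ^ 2^cj + x ^ 2^cj * y))
          = T (a j*(x*y^2^cj)) + T (a j*(x^2^cj*y)) := by
            rw [hrel, mul_add, Tadd]
        _ = T ((a j*(x*y^2^cj))^2^tj) + T (a j*(x^2^cj*y)) := by
            rw [← h3, Tshift]
        _ = T (a j^2^tj * (x^2^tj * y)) + T (a j*(x^2^cj*y)) := by rw [h1]
        _ = T ((a j ^ 2^tj * x^2^tj + a j * x^2^cj) * y) := by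
            rw [← Tadd]
            congr 1
            ring
    rw [Finset.sum_congr rfl fun j _ => hTj j]
    rw [← Tsum, ← Tadd, hW]
    congr 1
    simp only
    rw [add_mul, Finset.sum_mul]
  -- nondegeneracy: radical elements kill W
  have hWzero : ∀ x : GaloisField 2 m, (∀ y, Bform m n d e k a0 a x y = 0) → W x = 0 := by
    intro x hx
    refine nondeg m e hm0 he0 hem (W x) ?_
    intro y
    have := hx y
    rw [hBsum x y] at this
    rw [hM]
    rw [hT] at this
    exact this
  -- rewrite W as shifted twisted polynomial
  set R := 2*(k-1) with hR
  set δ := ν - (k-1) with hδ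
  set c : ℕ → GaloisField 2 m := fun r =>
    if hr : r < k-1 then a ⟨k-2-r, by omega⟩
    else if r = k-1 then a0
    else if h2 : r-k < k-1 then a ⟨r-k, h2⟩ ^ 2^((ν+(r-k)+1)*d) else 0 with hcdef
  have hWc : ∀ x : GaloisField 2 m, W x = ∑ r ∈ range (R+1), c r * (x^2^(d*δ)) ^ 2^(d*r) := by
    intro x
    have h1 : ∀ r, (x^2^(d*δ))^2^(d*r) = x^2^(d*(r+δ)) := fun r => by
      rw [pow2_pow2]; congr 1; ring
    simp only [h1]
    have hsplitR : R + 1 = (k-1) + 1 + (k-1) := by omega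
    rw [hsplitR, Finset.sum_range_add, Finset.sum_range_succ]
    -- middle term
    have hmid : c (k-1) * x^2^(d*((k-1)+δ)) = a0 * x^2^n := by
      have hc1 : c (k-1) = a0 := by
        simp only [hcdef]
        rw [dif_neg (lt_irrefl (k-1))]
        simp
      rw [hc1]
      congr 1
      have hex : d*((k-1)+δ) = ν*d := by
        rw [hδ, show (k-1)+(ν-(k-1)) = ν from by omega, Nat.mul_comm]
      rw [hex, key0 x]
    -- define pieces
    set Gp : ℕ → GaloisField 2 m := fun jn =>
      if h : jn < k-1 then a ⟨jn,h⟩ * x^2^((ν-(jn+1))*d) else 0 with hGp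
    set Hp : ℕ → GaloisField 2 m := fun jn =>
      if h : jn < k-1 then a ⟨jn,h⟩ ^ 2^((ν+jn+1)*d) * x^2^((ν+jn+1)*d) else 0 with hHp
    have hlow : ∑ r ∈ range (k-1), c r * x^2^(d*(r+δ)) = ∑ jn ∈ range (k-1), Gp jn := by
      rw [← Finset.sum_range_reflect Gp (k-1)]
      refine Finset.sum_congr rfl fun r hr => ?_
      rw [Finset.mem_range] at hr
      simp only [hGp, hcdef]
      rw [dif_pos hr, dif_pos (show k-1-1-r < k-1 by omega)]
      have h1 : a ⟨k-2-r, by omega⟩ = a ⟨k-1-1-r, by omega⟩ :=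
        fin_app_congr a (by omega) (by omega) (by omega)
      rw [h1]
      have hex : d*(r+δ) = (ν-(k-1-1-r+1))*d := by
        rw [Nat.mul_comm d (r+δ)]
        exact congrArg (· * d) (by omega)
      rw [hex]
    have hhigh : ∑ r ∈ range (k-1), c ((k-1)+1+r) * x^2^(d*(((k-1)+1+r)+δ))
        = ∑ jn ∈ range (k-1), Hp jn := by
      refine Finset.sum_congr rfl fun r hr => ?_
      rw [Finset.mem_range] at hr
      simp only [hHp, hcdef]
      rw [dif_neg (by omega), if_neg (by omega), dif_pos (show (k-1)+1+r-k < k-1 by omega)]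
      rw [dif_pos hr]
      have h1 : a ⟨(k-1)+1+r-k, by omega⟩ = a ⟨r, hr⟩ :=
        fin_app_congr a (by omega) hr (by omega)
      rw [h1]
      have h2 : (ν+((k-1)+1+r-k)+1)*d = (ν+r+1)*d := congrArg (· * d) (by omega)
      rw [h2]
      have h3 : d*(((k-1)+1+r)+δ) = (ν+r+1)*d := by
        rw [Nat.mul_comm d _]
        exact congrArg (· * d) (by omega)
      rw [h3]
    rw [hlow, hmid, hhigh]
    rw [hW]
    simp only
    have hfin : ∑ j : Fin (k-1), (a j ^ 2^((ν+(j:ℕ)+1)*d) * x^2^((ν+(j:ℕ)+1)*d)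
        + a j * x^2^((ν-((j:ℕ)+1))*d)) = ∑ jn ∈ range (k-1), (Hp jn + Gp jn) := by
      rw [← Fin.sum_univ_eq_sum_range (fun jn => Hp jn + Gp jn) (k-1)]
      refine Finset.sum_congr rfl fun j _ => ?_
      simp only [hHp, hGp]
      rw [dif_pos j.2, dif_pos j.2]
    rw [hfin, Finset.sum_add_distrib]
    ring
  -- the fixed-point bound
  have hfix : Nat.card {z : GaloisField 2 m // z ^ 2^d = z} ≤ 2^e := by
    have hiff : ∀ z : GaloisField 2 m, z^2^d = z ↔ z^2^e = z := by
      intro z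
      constructor
      · intro h
        have := pow2_gcd (hzm z) h
        rwa [← he'] at this
      · intro h
        rw [← hds]
        exact pow2_mul_self h s
    rw [Nat.card_congr (Equiv.subtypeEquivRight hiff)]
    exact card_fixed_le e (Nat.one_le_iff_ne_zero.mpr he0)
  -- nonzero coefficient
  have hcne : ∃ r0 ≤ R, c r0 ≠ 0 := by
    rw [not_and_or] at ha
    rcases ha with h0 | hj
    · refine ⟨k-1, by omega, ?_⟩
      simp only [hcdef]
      rw [dif_neg (lt_irrefl (k-1))]
      simpa using h0
    · push_neg at hj
      obtain ⟨j, hj⟩ := hj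
      have hjlt : (j:ℕ) < k-1 := j.2
      refine ⟨k-2-(j:ℕ), by omega, ?_⟩
      simp only [hcdef]
      rw [dif_pos (show k-2-(j:ℕ) < k-1 by omega)]
      have h1 : a ⟨k-2-(k-2-(j:ℕ)), by omega⟩ = a ⟨(j:ℕ), j.2⟩ :=
        fin_app_congr a (by omega) j.2 (by omega)
      rw [h1]
      exact hj
  obtain ⟨r0, hr0, hcr0⟩ := hcne
  -- final injection and count
  have hinj : Function.Injective
      (fun x : {x : GaloisField 2 m // ∀ y, Bform m n d e k a0 a x y = 0} =>
        (⟨x.1 ^ 2^(d*δ), by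
          have h1 := hWzero x.1 x.2
          rw [hWc x.1] at h1
          exact h1⟩ :
          {z : GaloisField 2 m // ∑ r ∈ range (R+1), c r * z ^ 2^(d*r) = 0})) := by
    intro x y h
    exact Subtype.ext (pow2_inj (d*δ) (congrArg Subtype.val h))
  refine le_trans (Nat.card_le_card_of_injective _ hinj) ?_
  exact key_count d (2^e) (Nat.one_le_two_pow) hfix R c r0 hr0 hcr0
end division
end
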